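/- arXiv:2011.12159 — 2 statements merged into one kernel-verified Lean document; each statement's English description precedes it below -/
import Mathlib

section
/- Every element of the alternating group A_n (for n ≥ 3) can be written as a product of at most ⌊n/2⌋ cycles of length 3. -/
/-!
Induct on the size of the support, proving the sharper bound `⌊#σ.support / 2⌋`. If `τ` moves
only points moved by `σ` and agrees with `σ` on a set `s`, then `τ⁻¹ * σ` fixes `s` and every
point fixed by `σ`. If some `a` has `σ a ≠ a` and `σ² a ≠ a`, take for `τ` the 3-cycle
`(a σa σ²a)` and `s = {a, σa}`. Otherwise `σ` is an involution; being even and nontrivial it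
contains two disjoint transpositions `(x y)(w v)`, a product of two 3-cycles, and `s = {x, y, w, v}`.
-/

open Finset

namespace Equiv.Perm

variable {α : Type*} [DecidableEq α] [Fintype α] {σ : Perm α}

theorem card_support_inv_mul_add_card_le {τ : Perm α} {s : Finset α}
    (hτ : τ.support ⊆ σ.support) (hs : s ⊆ σ.support) (hστ : ∀ x ∈ s, τ x = σ x) :
    #(τ⁻¹ * σ).support + #s ≤ #σ.support := by
  suffices h : (τ⁻¹ * σ).support ⊆ σ.support \ s by
    have := card_le_card h
    rw [card_sdiff_of_subset hs] at this
    have := card_le_card hs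
    omega
  intro x hx
  rw [mem_support, mul_apply, Ne, inv_eq_iff_eq] at hx
  refine mem_sdiff.2 ⟨by_contra fun hxσ => hx ?_, fun hxs => hx (hστ x hxs).symm⟩
  rw [notMem_support.1 hxσ, notMem_support.1 fun h => hxσ (hτ h)]

theorem card_support_swap_mul_swap_inv_mul_add_two_le {a : α} (ha : σ a ≠ a)
    (ha' : σ (σ a) ≠ a) :
    #((swap a (σ (σ a)) * swap a (σ a))⁻¹ * σ).support + 2 ≤ #σ.support := by
  have hb : σ (σ a) ≠ σ a := fun h => ha (σ.injective h)
  have hab : a ≠ σ a := ha.symm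
  convert card_support_inv_mul_add_card_le (s := {a, σ a}) ?_ ?_ ?_ using 2
  · rw [card_pair hab]
  · refine (support_mul_le _ _).trans ?_
    rw [support_swap ha'.symm, support_swap hab]
    intro x
    simp only [sup_eq_union, mem_union, mem_insert, mem_singleton, mem_support]
    rintro ((rfl | rfl) | (rfl | rfl)) <;> simp [*]
  · intro x
    simp only [mem_insert, mem_singleton, mem_support]
    rintro (rfl | rfl) <;> simp [*]
  · intro x
    simp only [mem_insert, mem_singleton]
    rintro (rfl | rfl) <;> simp [swap_apply_of_ne_of_ne, *]

theorem card_support_swap_mul_swap_inv_mul_add_four_le {x w : α} (hx : σ x ≠ x) (hw : σ w ≠ w)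
    (hwx : w ≠ x) (hwy : w ≠ σ x) (hx2 : σ (σ x) = x) (hw2 : σ (σ w) = w) :
    #((swap x (σ x) * swap w (σ w))⁻¹ * σ).support + 4 ≤ #σ.support := by
  have hvx : σ w ≠ x := fun h => hwy (by rw [← h, hw2])
  have hvy : σ w ≠ σ x := fun h => hwx (σ.injective h)
  obtain ⟨hxw, hyw, hxv, hyv, hwv, hxy⟩ :
      x ≠ w ∧ σ x ≠ w ∧ x ≠ σ w ∧ σ x ≠ σ w ∧ w ≠ σ w ∧ x ≠ σ x :=
    ⟨hwx.symm, hwy.symm, hvx.symm, hvy.symm, hw.symm, hx.symm⟩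
  convert card_support_inv_mul_add_card_le (s := {x, σ x, w, σ w}) ?_ ?_ ?_ using 2
  · rw [card_insert_of_notMem (by simp [*]), card_insert_of_notMem (by simp [*]), card_pair hwv]
  · refine (support_mul_le _ _).trans ?_
    rw [support_swap hxy, support_swap hwv]
    intro y
    simp only [sup_eq_union, mem_union, mem_insert, mem_singleton, mem_support]
    rintro ((rfl | rfl) | (rfl | rfl)) <;> simp [*]
  · intro y
    simp only [mem_insert, mem_singleton, mem_support]
    rintro (rfl | rfl | rfl | rfl) <;> simp [*]
  · intro y
    simp only [mem_insert, mem_singleton]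
    rintro (rfl | rfl | rfl | rfl) <;> simp [swap_apply_of_ne_of_ne, *]

theorem exists_mem_support_ne_of_mem_alternatingGroup (hσ : σ ∈ alternatingGroup α) (h1 : σ ≠ 1)
    (x : α) : ∃ w ∈ σ.support, w ≠ x ∧ w ≠ σ x := by
  have h2 : #σ.support ≠ 2 := fun h => by
    simpa [mem_alternatingGroup.1 hσ] using (card_support_eq_two.1 h).sign_eq
  have := two_le_card_support_of_ne_one h1
  have : #({x, σ x} : Finset α) ≤ 2 := card_le_two
  obtain ⟨w, hw, hwxy⟩ :=
    exists_mem_notMem_of_card_lt_card (s := {x, σ x}) (t := σ.support) (by omega)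
  exact ⟨w, hw, by simpa using hwxy⟩

theorem exists_isThreeCycle_list_card_support_prod_inv_mul_le (hσ : σ ∈ alternatingGroup α)
    (h1 : σ ≠ 1) : ∃ l : List (Perm α), l ≠ [] ∧ (∀ τ ∈ l, IsThreeCycle τ) ∧
      #(l.prod⁻¹ * σ).support + 2 * l.length ≤ #σ.support := by
  by_cases h : ∃ a, σ a ≠ a ∧ σ (σ a) ≠ a
  · obtain ⟨a, ha, ha'⟩ := h
    refine ⟨[swap a (σ (σ a)) * swap a (σ a)], List.cons_ne_nil _ _, ?_, ?_⟩
    · simp only [List.mem_singleton, forall_eq]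
      exact isThreeCycle_swap_mul_swap_same ha'.symm ha.symm fun h => ha (σ.injective h)
    · simpa using card_support_swap_mul_swap_inv_mul_add_two_le ha ha'
  · simp only [not_exists, not_and, not_not] at h
    have hinv : ∀ a, σ (σ a) = a := fun a => by
      by_cases ha : σ a = a
      · rw [ha, ha]
      · exact h a ha
    obtain ⟨x, hx⟩ : ∃ x, σ x ≠ x := by simpa [Perm.ext_iff] using h1
    obtain ⟨w, hw, hwx, hwy⟩ := exists_mem_support_ne_of_mem_alternatingGroup hσ h1 x
    rw [mem_support] at hw
    refine ⟨[swap x (σ x) * swap x w, swap w x * swap w (σ w)], by simp, ?_, ?_⟩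
    · simp only [List.mem_cons, List.not_mem_nil, or_false, forall_eq_or_imp, forall_eq]
      exact ⟨isThreeCycle_swap_mul_swap_same hx.symm hwx.symm hwy.symm,
        isThreeCycle_swap_mul_swap_same hwx hw.symm
          fun h => hwy (by rw [h, hinv])⟩
    · have hprod : swap x (σ x) * swap x w * (swap w x * swap w (σ w)) =
          swap x (σ x) * swap w (σ w) := by
        simp [swap_comm w x, mul_assoc]
      simpa [hprod] using
        card_support_swap_mul_swap_inv_mul_add_four_le hx hw hwx hwy (hinv x) (hinv w)

theorem exists_isThreeCycle_list_prod_eq (hσ : σ ∈ alternatingGroup α) :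
    ∃ l : List (Perm α), l.length ≤ #σ.support / 2 ∧ (∀ τ ∈ l, IsThreeCycle τ) ∧ l.prod = σ := by
  induction hc : #σ.support using Nat.strong_induction_on generalizing σ with
  | _ m ih =>
  rcases eq_or_ne σ 1 with rfl | h1
  · exact ⟨[], by simp, by simp, rfl⟩
  obtain ⟨l, hl, hl3, hcard⟩ := exists_isThreeCycle_list_card_support_prod_inv_mul_le hσ h1
  have hlσ : l.prod⁻¹ * σ ∈ alternatingGroup α :=
    mul_mem (inv_mem (list_prod_mem fun τ hτ => (hl3 τ hτ).mem_alternatingGroup)) hσ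
  have hlen := List.length_pos_iff.2 hl
  obtain ⟨l', hl', hl'3, hprod⟩ := ih _ (by omega) hlσ rfl
  refine ⟨l ++ l', by simp only [List.length_append]; omega, ?_, by simp [hprod]⟩
  simpa [or_imp, forall_and] using ⟨hl3, hl'3⟩

end Equiv.Perm

theorem stmt_0_general (n : ℕ) (σ : Equiv.Perm (Fin n))
    (hσ : σ ∈ alternatingGroup (Fin n)) :
    ∃ l : List (Equiv.Perm (Fin n)),
      l.length ≤ n / 2 ∧ (∀ τ ∈ l, Equiv.Perm.IsThreeCycle τ) ∧ l.prod = σ := by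
  obtain ⟨l, hl, hl3, hprod⟩ := Equiv.Perm.exists_isThreeCycle_list_prod_eq hσ
  have : #σ.support ≤ n := by simpa using card_le_univ σ.support
  exact ⟨l, hl.trans (Nat.div_le_div_right this), hl3, hprod⟩

/-- Every element of the alternating group `A_n` (for `n ≥ 3`) can be written as a
product of at most `⌊n/2⌋` cycles of length 3. -/
theorem stmt_0 (n : ℕ) (hn : 3 ≤ n) (σ : Equiv.Perm (Fin n))
    (hσ : σ ∈ alternatingGroup (Fin n)) :
    ∃ l : List (Equiv.Perm (Fin n)),
      l.length ≤ n / 2 ∧ (∀ τ ∈ l, Equiv.Perm.IsThreeCycle τ) ∧ l.prod = σ :=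
  stmt_0_general n σ hσ
end

section
/- If a permutation σ in the alternating group A_n has a disjoint cycle decomposition in which every cycle has odd length, then σ is a square in A_n, i.e., there exists τ ∈ A_n with τ² = σ. -/
lemma odd_multiset_lcm (s : Multiset ℕ) (h : ∀ k ∈ s, Odd k) : Odd s.lcm := by
  induction s using Multiset.induction with
  | empty => simp [Multiset.lcm_zero]
  | cons a s ih =>
    rw [Multiset.lcm_cons]
    have ha : Odd a := h a (Multiset.mem_cons_self a s)
    have hs : Odd s.lcm := ih (fun k hk => h k (Multiset.mem_cons_of_mem hk))
    rw [← Nat.not_even_iff_odd, even_iff_two_dvd] at ha hs ⊢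
    intro h2
    rcases (Nat.prime_two.dvd_mul).mp (h2.trans (Nat.lcm_dvd (dvd_mul_right a s.lcm) (dvd_mul_left s.lcm a))) with h' | h'
    · exact ha h'
    · exact hs h'

/-- If a permutation `σ` in the alternating group `A_n` has a disjoint cycle
decomposition in which every cycle has odd length, then `σ` is a square in `A_n`. -/
theorem stmt_3 (n : ℕ) (σ : Equiv.Perm (Fin n))
    (hσ : σ ∈ alternatingGroup (Fin n))
    (hodd : ∀ k ∈ σ.cycleType, Odd k) :
    ∃ τ ∈ alternatingGroup (Fin n), τ ^ 2 = σ := by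
  have hord : Odd (orderOf σ) := by
    rw [← Equiv.Perm.lcm_cycleType]
    exact odd_multiset_lcm _ hodd
  obtain ⟨k, hk⟩ := hord
  refine ⟨σ ^ (k + 1), Subgroup.pow_mem _ hσ _, ?_⟩
  rw [← pow_mul]
  have : (k + 1) * 2 = orderOf σ + 1 := by omega
  rw [this, pow_succ, pow_orderOf_eq_one, one_mul]
end
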